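/- arXiv:2103.02384 — 6 statements merged into one kernel-verified Lean document; each statement's English description precedes it below -/
import Mathlib

section
/- Theorem 2: Let B be a set of boundary conditions for Dom and G (with n ≥ 1 goals) that is contrastive, i.e., any two distinct elements of B are contrastive. Then for any two distinct φ, ψ ∈ B, φ does not imply ψ and ψ does not imply φ (neither predicate's model set is contained in the other's). -/
/-- The conjunction of all goals, semantically. -/
def GoalConj {W : Type*} {n : ℕ} (G : Fin n → W → Prop) (w : W) : Prop :=
  ∀ i, G i w

/-- The conjunction of all goals except the `i`-th one. -/
def GoalsExcept {W : Type*} {n : ℕ} (G : Fin n → W → Prop) (i : Fin n) (w : W) : Prop :=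
  ∀ j, j ≠ i → G j w

/-- `φ` is a boundary condition for domain `Dom` and goals `G`:
logical inconsistency, minimality, and non-triviality. -/
def IsBC {W : Type*} {n : ℕ} (Dom : W → Prop) (G : Fin n → W → Prop) (φ : W → Prop) : Prop :=
  (¬ ∃ w, Dom w ∧ GoalConj G w ∧ φ w) ∧
  (∀ i : Fin n, ∃ w, Dom w ∧ GoalsExcept G i w ∧ φ w) ∧
  ¬ (∀ w, φ w ↔ ¬ GoalConj G w)

/-- `f` is a witness of the BC `φ` iff `φ ∧ ¬ f` is not a BC. -/
def IsWitness {W : Type*} {n : ℕ} (Dom : W → Prop) (G : Fin n → W → Prop)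
    (φ f : W → Prop) : Prop :=
  ¬ IsBC Dom G (fun w => φ w ∧ ¬ f w)

/-- Two BCs are contrastive iff neither is a witness of the other. -/
def Contrastive {W : Type*} {n : ℕ} (Dom : W → Prop) (G : Fin n → W → Prop)
    (φ ψ : W → Prop) : Prop :=
  ¬ IsWitness Dom G ψ φ ∧ ¬ IsWitness Dom G φ ψ

section

variable {W : Type*} {n : ℕ} {Dom : W → Prop} {G : Fin n → W → Prop} {φ ψ : W → Prop}

/-- Non-triviality yields a world violating some goal `i`, and minimality at `i` yields a model. -/
theorem IsBC.satisfiable (h : IsBC Dom G φ) : ∃ w, φ w := by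
  obtain ⟨-, hmin, hnontriv⟩ := h
  by_contra! hφ
  obtain ⟨w, hw⟩ := not_forall.mp hnontriv
  have hviol : ¬ GoalConj G w := fun hG => hw (iff_of_false (hφ w) (not_not_intro hG))
  obtain ⟨i, -⟩ : ∃ i, ¬ G i w := not_forall.mp hviol
  obtain ⟨w', -, -, hw'⟩ := hmin i
  exact hφ w' hw'

theorem Contrastive.symm (h : Contrastive Dom G φ ψ) : Contrastive Dom G ψ φ :=
  ⟨h.2, h.1⟩

theorem Contrastive.not_forall_imp (h : Contrastive Dom G φ ψ) : ¬ ∀ w, φ w → ψ w := by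
  obtain ⟨w, hφ, hψ⟩ := (not_not.mp h.2 : IsBC Dom G fun w => φ w ∧ ¬ ψ w).satisfiable
  exact fun himp => hψ (himp w hφ)

end

theorem contrastive_set_no_implication_general {W : Type*} {n : ℕ}
    (Dom : W → Prop) (G : Fin n → W → Prop) (B : Set (W → Prop))
    (hcon : ∀ φ ∈ B, ∀ ψ ∈ B, φ ≠ ψ → Contrastive Dom G φ ψ) :
    ∀ φ ∈ B, ∀ ψ ∈ B, φ ≠ ψ →
      (¬ ∀ w, φ w → ψ w) ∧ (¬ ∀ w, ψ w → φ w) := by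
  intro φ hφ ψ hψ hne
  have h := hcon φ hφ ψ hψ hne
  exact ⟨h.not_forall_imp, h.symm.not_forall_imp⟩

/-- Theorem 2: in a contrastive set of BCs, no BC implies another. -/
theorem contrastive_set_no_implication {W : Type*} {n : ℕ} (hn : 1 ≤ n)
    (Dom : W → Prop) (G : Fin n → W → Prop) (B : Set (W → Prop))
    (hBC : ∀ φ ∈ B, IsBC Dom G φ)
    (hcon : ∀ φ ∈ B, ∀ ψ ∈ B, φ ≠ ψ → Contrastive Dom G φ ψ) :
    ∀ φ ∈ B, ∀ ψ ∈ B, φ ≠ ψ →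
      (¬ ∀ w, φ w → ψ w) ∧ (¬ ∀ w, ψ w → φ w) :=
  contrastive_set_no_implication_general Dom G B hcon
end

section
/- Theorem 3 (contrastive BCs capture different divergences): If φ and ψ are contrastive boundary conditions for Dom and G (with n ≥ 1 goals), then there exists a model w with φ w ∧ ¬ ψ w and there exists a model w' with ψ w' ∧ ¬ φ w'. -/
section

variable {W : Type*} {n : ℕ} {Dom : W → Prop} {G : Fin n → W → Prop} {φ ψ : W → Prop}

theorem IsBC.exists_of_pos (h : IsBC Dom G φ) (hn : 0 < n) : ∃ w, Dom w ∧ φ w := by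
  obtain ⟨w, hDom, -, hφ⟩ := h.2.1 ⟨0, hn⟩
  exact ⟨w, hDom, hφ⟩

theorem Contrastive.isBC_and_not_right (h : Contrastive Dom G φ ψ) :
    IsBC Dom G (fun w => φ w ∧ ¬ ψ w) :=
  not_not.mp h.2

theorem Contrastive.isBC_and_not_left (h : Contrastive Dom G φ ψ) :
    IsBC Dom G (fun w => ψ w ∧ ¬ φ w) :=
  not_not.mp h.1

end

theorem contrastive_different_divergences_general {W : Type*} {n : ℕ} (hn : 1 ≤ n)
    (Dom : W → Prop) (G : Fin n → W → Prop) (φ ψ : W → Prop)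
    (hcon : Contrastive Dom G φ ψ) :
    (∃ w, φ w ∧ ¬ ψ w) ∧ (∃ w', ψ w' ∧ ¬ φ w') := by
  obtain ⟨w, -, hw⟩ := hcon.isBC_and_not_right.exists_of_pos hn
  obtain ⟨w', -, hw'⟩ := hcon.isBC_and_not_left.exists_of_pos hn
  exact ⟨⟨w, hw⟩, ⟨w', hw'⟩⟩

/-- Theorem 3: contrastive BCs capture different divergences. -/
theorem contrastive_different_divergences {W : Type*} {n : ℕ} (hn : 1 ≤ n)
    (Dom : W → Prop) (G : Fin n → W → Prop) (φ ψ : W → Prop)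
    (hφ : IsBC Dom G φ) (hψ : IsBC Dom G ψ)
    (hcon : Contrastive Dom G φ ψ) :
    (∃ w, φ w ∧ ¬ ψ w) ∧ (∃ w', ψ w' ∧ ¬ φ w') :=
  contrastive_different_divergences_general hn Dom G φ ψ hcon
end

section
/- Theorem 5 (BC termination condition): If there exists an index i such that no model w satisfies Dom w ∧ GoalsExcept i w ∧ ¬ (G i w), then there is no boundary condition for Dom and G. -/
theorem goalConj_iff_goalsExcept_and {W : Type*} {n : ℕ} (G : Fin n → W → Prop) (i : Fin n)
    (w : W) : GoalConj G w ↔ GoalsExcept G i w ∧ G i w := by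
  refine ⟨fun hall => ⟨fun j _ => hall j, hall i⟩, fun ⟨hexcept, hi⟩ j => ?_⟩
  rcases eq_or_ne j i with rfl | hj
  · exact hi
  · exact hexcept j hj

theorem IsBC.exists_goalsExcept_not {W : Type*} {n : ℕ} {Dom : W → Prop} {G : Fin n → W → Prop}
    {φ : W → Prop} (hφ : IsBC Dom G φ) (i : Fin n) :
    ∃ w, Dom w ∧ GoalsExcept G i w ∧ ¬ G i w := by
  obtain ⟨hinconsistent, hminimal, -⟩ := hφ
  obtain ⟨w, hdom, hexcept, hφw⟩ := hminimal i
  refine ⟨w, hdom, hexcept, fun hi => hinconsistent ⟨w, hdom, ?_, hφw⟩⟩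
  exact (goalConj_iff_goalsExcept_and G i w).2 ⟨hexcept, hi⟩

theorem bc_termination_general {W : Type*} {n : ℕ}
    (Dom : W → Prop) (G : Fin n → W → Prop)
    (h : ∃ i : Fin n, ¬ ∃ w, Dom w ∧ GoalsExcept G i w ∧ ¬ G i w) :
    ¬ ∃ φ : W → Prop, IsBC Dom G φ := by
  rintro ⟨φ, hφ⟩
  obtain ⟨i, hi⟩ := h
  exact hi (hφ.exists_goalsExcept_not i)

/-- Theorem 5 (BC termination condition). -/
theorem bc_termination {W : Type*} {n : ℕ} (hn : 1 ≤ n)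
    (Dom : W → Prop) (G : Fin n → W → Prop)
    (h : ∃ i : Fin n, ¬ ∃ w, Dom w ∧ GoalsExcept G i w ∧ ¬ G i w) :
    ¬ ∃ φ : W → Prop, IsBC Dom G φ :=
  bc_termination_general Dom G h
end

section
/- Theorem 6: Let B be a finite set of predicates on W, each of which is a boundary condition for Dom and G, and define the augmented domain Dom' : W → Prop by Dom' w := Dom w ∧ ∀ ψ ∈ B, ¬ ψ w. If φ is a boundary condition for Dom' and G, then φ is a boundary condition for Dom and G. -/
theorem IsBC.not_of_dom_of_goalConj {W : Type*} {n : ℕ} {Dom : W → Prop}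
    {G : Fin n → W → Prop} {ψ : W → Prop} (hψ : IsBC Dom G ψ) {w : W} (hD : Dom w)
    (hG : GoalConj G w) : ¬ ψ w :=
  fun hψw => hψ.1 ⟨w, hD, hG, hψw⟩

theorem IsBC.of_le_dom {W : Type*} {n : ℕ} {Dom Dom' : W → Prop} {G : Fin n → W → Prop}
    {φ : W → Prop} (hle : ∀ w, Dom' w → Dom w)
    (hgoal : ∀ w, Dom w → GoalConj G w → Dom' w) (hφ : IsBC Dom' G φ) :
    IsBC Dom G φ := by
  obtain ⟨hincons, hmin, hnontriv⟩ := hφ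
  refine ⟨?_, fun i => ?_, hnontriv⟩
  · rintro ⟨w, hD, hG, hφw⟩
    exact hincons ⟨w, hgoal w hD hG, hG, hφw⟩
  · obtain ⟨w, hD', hGE, hφw⟩ := hmin i
    exact ⟨w, hle w hD', hGE, hφw⟩

theorem bc_of_augmented_is_bc_general {W : Type*} {n : ℕ}
    (Dom : W → Prop) (G : Fin n → W → Prop) (B : Finset (W → Prop))
    (hBC : ∀ ψ ∈ B, IsBC Dom G ψ) (φ : W → Prop)
    (hφ : IsBC (fun w => Dom w ∧ ∀ ψ ∈ B, ¬ ψ w) G φ) :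
    IsBC Dom G φ :=
  hφ.of_le_dom (fun _ hD' => hD'.1)
    fun _ hD hG => ⟨hD, fun ψ hψ => (hBC ψ hψ).not_of_dom_of_goalConj hD hG⟩

/-- Theorem 6: a BC under the augmented domain is a BC under the original domain. -/
theorem bc_of_augmented_is_bc {W : Type*} {n : ℕ} (hn : 1 ≤ n)
    (Dom : W → Prop) (G : Fin n → W → Prop) (B : Finset (W → Prop))
    (hBC : ∀ ψ ∈ B, IsBC Dom G ψ) (φ : W → Prop)
    (hφ : IsBC (fun w => Dom w ∧ ∀ ψ ∈ B, ¬ ψ w) G φ) :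
    IsBC Dom G φ :=
  bc_of_augmented_is_bc_general Dom G B hBC φ hφ
end

section
/- Theorem 7: Let B be a finite set of predicates on W, each of which is a boundary condition for Dom and G (with n ≥ 1 goals), and define Dom' w := Dom w ∧ ∀ ψ ∈ B, ¬ ψ w. If φ is a boundary condition for Dom' and G, then for every ψ ∈ B, the predicate fun w => φ w ∧ ¬ ψ w is a boundary condition for Dom and G; consequently, no ψ ∈ B is a witness of φ (with respect to Dom and G). -/
/-! A goal-consistent model of `Dom` refutes every blocked BC, so it already lies in the
augmented domain, where `φ` is inconsistent with the goals; this gives inconsistency of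
`φ ∧ ¬ ψ`. Minimality is inherited because the augmented domain excludes `ψ`. Non-triviality
holds because any model of `Dom ∧ ψ` from the minimality of `ψ` violates the goals but not
`φ ∧ ¬ ψ`. -/

section

variable {W : Type*} {n : ℕ} {Dom : W → Prop} {G : Fin n → W → Prop} {φ ψ : W → Prop}

theorem IsBC.not_goalConj (hψ : IsBC Dom G ψ) {w : W} (hD : Dom w) (hw : ψ w) :
    ¬ GoalConj G w :=
  fun hG => hψ.1 ⟨w, hD, hG, hw⟩

theorem IsBC.exists_not_goalConj (hψ : IsBC Dom G ψ) (i : Fin n) :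
    ∃ w, ψ w ∧ ¬ GoalConj G w := by
  obtain ⟨w, hD, -, hw⟩ := hψ.2.1 i
  exact ⟨w, hw, hψ.not_goalConj hD hw⟩

theorem not_forall_and_not_iff_not_goalConj (h : ∃ w, ψ w ∧ ¬ GoalConj G w) :
    ¬ ∀ w, (φ w ∧ ¬ ψ w) ↔ ¬ GoalConj G w := by
  obtain ⟨w, hw, hG⟩ := h
  exact fun hiff => ((hiff w).2 hG).2 hw

theorem isBC_and_not_of_isBC_augmented {B : Set (W → Prop)} (hBC : ∀ ψ ∈ B, IsBC Dom G ψ)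
    (hφ : IsBC (fun w => Dom w ∧ ∀ ψ ∈ B, ¬ ψ w) G φ) (hψ : ψ ∈ B) (i : Fin n) :
    IsBC Dom G (fun w => φ w ∧ ¬ ψ w) := by
  refine ⟨?_, fun j => ?_,
    not_forall_and_not_iff_not_goalConj ((hBC ψ hψ).exists_not_goalConj i)⟩
  · rintro ⟨w, hD, hG, hφw, -⟩
    have hDom' : Dom w ∧ ∀ ψ' ∈ B, ¬ ψ' w :=
      ⟨hD, fun ψ' hψ' hw => (hBC ψ' hψ').not_goalConj hD hw hG⟩
    exact hφ.1 ⟨w, hDom', hG, hφw⟩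
  · obtain ⟨w, ⟨hD, hB⟩, hGE, hφw⟩ := hφ.2.1 j
    exact ⟨w, hD, hGE, hφw, hB ψ hψ⟩

end

/-- Theorem 7: a BC of the augmented domain differs from every blocked BC,
and no blocked BC is a witness of it. -/
theorem bc_of_augmented_not_witnessed {W : Type*} {n : ℕ} (hn : 1 ≤ n)
    (Dom : W → Prop) (G : Fin n → W → Prop) (B : Finset (W → Prop))
    (hBC : ∀ ψ ∈ B, IsBC Dom G ψ) (φ : W → Prop)
    (hφ : IsBC (fun w => Dom w ∧ ∀ ψ ∈ B, ¬ ψ w) G φ) :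
    ∀ ψ ∈ B, IsBC Dom G (fun w => φ w ∧ ¬ ψ w) ∧ ¬ IsWitness Dom G φ ψ := by
  intro ψ hψ
  have hbc : IsBC Dom G (fun w => φ w ∧ ¬ ψ w) :=
    isBC_and_not_of_isBC_augmented (B := ↑B) hBC hφ (Finset.mem_coe.2 hψ) ⟨0, hn⟩
  exact ⟨hbc, not_not_intro hbc⟩
end

section
/- Theorem 8 (soundness of the joint framework, sequence form): Let φ₁, …, φₘ be predicates on W such that for every j ≤ m, φⱼ is a boundary condition for the augmented domain fun w => Dom w ∧ ∀ i < j, ¬ φᵢ w (together with goals G, n ≥ 1). Then every φⱼ is a boundary condition for the original Dom and G, and for all i < j, the predicate fun w => φⱼ w ∧ ¬ φᵢ w is a boundary condition for Dom and G (so no earlier φᵢ is a witness of a later φⱼ). -/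
/-!
Inconsistency is the only part of being a BC that does not pass from the augmented domain to
`Dom`. It does pass, by well-founded induction on `j`: a model of `Dom`, the goals and `φ j`
either satisfies no earlier `φ i`, contradicting inconsistency in the augmented domain, or it
satisfies an earlier one, contradicting the induction hypothesis. The minimality witnesses of
`φ j` in the augmented domain avoid every earlier `φ i`, so they also witness minimality of
`φ j ∧ ¬ φ i`; non-triviality of `φ j ∧ ¬ φ i` comes from a model of `φ i` violating the goals.
-/

theorem WellFoundedLT.forall_not_of_not_given_lt {ι α : Type*} [LT ι] [WellFoundedLT ι]
    {φ : ι → α → Prop} {ψ : α → Prop} (h : ∀ j x, ψ x → (∀ i < j, ¬ φ i x) → ¬ φ j x) :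
    ∀ j x, ψ x → ¬ φ j x := by
  intro j
  induction j using WellFoundedLT.induction with
  | _ j ih => exact fun x hx => h j x hx fun i hi => ih i hi x hx

namespace IsBC

variable {W : Type*} {n : ℕ} {Dom Dom' : W → Prop} {G : Fin n → W → Prop} {φ ψ : W → Prop}

theorem of_dom_le (h : IsBC Dom' G φ) (hDom : ∀ w, Dom' w → Dom w)
    (hincons : ¬ ∃ w, Dom w ∧ GoalConj G w ∧ φ w) : IsBC Dom G φ :=
  ⟨hincons, fun i => (h.2.1 i).imp fun w ⟨hD, hG, hφ⟩ => ⟨hDom w hD, hG, hφ⟩, h.2.2⟩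

theorem exists_not_goalConj_s11 (h : IsBC Dom G φ) (i : Fin n) : ∃ w, φ w ∧ ¬ GoalConj G w := by
  obtain ⟨w, hD, -, hφ⟩ := h.2.1 i
  exact ⟨w, hφ, fun hG => h.1 ⟨w, hD, hG, hφ⟩⟩

theorem and_not (hφ : IsBC Dom' G φ) (hDom : ∀ w, Dom' w → Dom w ∧ ¬ ψ w)
    (hincons : ¬ ∃ w, Dom w ∧ GoalConj G w ∧ φ w) (hψ : IsBC Dom G ψ) (i : Fin n) :
    IsBC Dom G (fun w => φ w ∧ ¬ ψ w) := by
  refine ⟨fun ⟨w, hD, hG, hφw, _⟩ => hincons ⟨w, hD, hG, hφw⟩, fun k => ?_, fun hiff => ?_⟩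
  · obtain ⟨w, hD', hG, hφw⟩ := hφ.2.1 k
    exact ⟨w, (hDom w hD').1, hG, hφw, (hDom w hD').2⟩
  · obtain ⟨w, hψw, hG⟩ := hψ.exists_not_goalConj_s11 i
    exact ((hiff w).2 hG).2 hψw

end IsBC

/-- Theorem 8 (soundness of the joint framework, sequence form). -/
theorem joint_framework_sound {W : Type*} {n : ℕ} (hn : 1 ≤ n)
    (Dom : W → Prop) (G : Fin n → W → Prop) (m : ℕ) (φ : Fin m → W → Prop)
    (hφ : ∀ j : Fin m, IsBC (fun w => Dom w ∧ ∀ i < j, ¬ φ i w) G (φ j)) :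
    (∀ j : Fin m, IsBC Dom G (φ j)) ∧
    (∀ i j : Fin m, i < j → IsBC Dom G (fun w => φ j w ∧ ¬ φ i w)) := by
  have incons : ∀ j, ¬ ∃ w, Dom w ∧ GoalConj G w ∧ φ j w := by
    have hexcl := WellFoundedLT.forall_not_of_not_given_lt (ψ := fun w => Dom w ∧ GoalConj G w)
      fun j w ⟨hD, hG⟩ hearlier hφj => (hφ j).1 ⟨w, ⟨hD, hearlier⟩, hG, hφj⟩
    exact fun j ⟨w, hD, hG, hφj⟩ => hexcl j w ⟨hD, hG⟩ hφj
  have bc : ∀ j, IsBC Dom G (φ j) := fun j => (hφ j).of_dom_le (fun _ h => h.1) (incons j)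
  exact ⟨bc, fun i j hij =>
    (hφ j).and_not (fun _ h => ⟨h.1, h.2 i hij⟩) (incons j) (bc i) ⟨0, hn⟩⟩
end
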